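/- Let (ΔM_m) be a martingale difference sequence with |ΔM_m| ≤ 1 a.s. Then M_n = ∑_{m=1}^n ΔM_m satisfies M_n = O(√(n log log n)) almost surely. -/

import Mathlib

/-!
For `|x| ≤ 1`, convexity gives `exp (L x) ≤ cosh L + x sinh L`; since the increments have zero
conditional mean, `E[exp (L S_{n+1}) | ℱ n] ≤ cosh L · exp (L S_n)`, hence
`E exp (L S_n) ≤ cosh L ^ n ≤ exp (n L² / 2)`. As `exp (L S_n)` is a nonnegative submartingale,
Doob's maximal inequality upgrades this to the maximal Azuma bound
`P (max_{j ≤ N} S_j ≥ t) ≤ exp (-t² / 2N)`. On the dyadic block `N = 2 ^ k` with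
`t = 2 √(2 ^ k log (k + 1))` the bound is `1 / (k + 1)²`, which is summable, so by Borel–Cantelli
almost surely `max_{j ≤ 2 ^ k} S_j < t` for all large `k`; for `2 ^ (k - 1) ≤ n < 2 ^ k` this
threshold is at most `4 √(n log log n)`. The same applied to `-S` gives the two-sided bound, and
the finitely many remaining `n` are absorbed into the constant.
-/

open MeasureTheory Filter Finset Real Asymptotics
open scoped ENNReal NNReal

lemma Real.exp_mul_le_cosh_add_sinh_mul {x : ℝ} (L : ℝ) (hx : |x| ≤ 1) :
    exp (L * x) ≤ cosh L + sinh L * x := by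
  obtain ⟨hx₁, hx₂⟩ := abs_le.1 hx
  -- `L * x` is the convex combination of `-L` and `L` with weights `(1 - x) / 2` and `(1 + x) / 2`
  have h := convexOn_exp.2 (Set.mem_univ (-L)) (Set.mem_univ L)
    (by linarith : 0 ≤ (1 - x) / 2) (by linarith : 0 ≤ (1 + x) / 2) (by ring)
  simp only [smul_eq_mul, show (1 - x) / 2 * -L + (1 + x) / 2 * L = L * x by ring] at h
  exact h.trans_eq (by rw [cosh_eq, sinh_eq]; ring)

lemma Finset.sum_Icc_one_eq_sum_range {M : Type*} [AddCommMonoid M] (f : ℕ → M) (n : ℕ) :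
    ∑ m ∈ Icc 1 n, f m = ∑ k ∈ range n, f (k + 1) := by
  rw [range_eq_Ico, sum_Ico_add' f 0 n 1]
  rfl

lemma Real.log_log_pos {x : ℝ} (hx : 3 ≤ x) : 0 < log (log x) :=
  log_pos <| (lt_log_iff_exp_lt (by linarith)).2 (exp_one_lt_three.trans_le hx)

lemma two_mul_sqrt_two_pow_mul_log_le {n k : ℕ} (hk : 7 ≤ k) (hn : 2 ^ k ≤ 2 * n) :
    2 * √(2 ^ k * log (k + 1)) ≤ 4 * √(n * log (log n)) := by
  have hk' : (7 : ℝ) ≤ k := by exact_mod_cast hk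
  have hn' : (2 : ℝ) ^ k ≤ 2 * n := by exact_mod_cast hn
  have hn0 : (0 : ℝ) < n := by linarith [pow_pos (two_pos : (0 : ℝ) < 2) k]
  have hlogn : (k - 1) / 2 ≤ log n := by
    have h := log_le_log (by positivity) hn'
    rw [log_pow, log_mul two_ne_zero hn0.ne'] at h
    nlinarith [log_two_gt_d9]
  have hloglog : log (k + 1) ≤ 2 * log (log n) :=
    calc log (k + 1) ≤ log (log n ^ 2) := log_le_log (by positivity) (by nlinarith)
      _ = 2 * log (log n) := by rw [log_pow]; norm_num
  calc 2 * √(2 ^ k * log (k + 1)) ≤ 2 * √(2 * n * (2 * log (log n))) := by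
        gcongr 2 * √?_
        exact mul_le_mul hn' hloglog (log_nonneg (by linarith)) (by positivity)
    _ = 4 * √(n * log (log n)) := by
        rw [show 2 * n * (2 * log (log n)) = 2 ^ 2 * (n * log (log n)) by ring,
          sqrt_mul (by norm_num), sqrt_sq (by norm_num)]
        ring

section CondExp

variable {Ω : Type*} {m m0 : MeasurableSpace Ω} {μ : Measure Ω} [IsFiniteMeasure μ] {Y : Ω → ℝ}

lemma condExp_const_add_mul_eq_of_condExp_eq_zero (hm : m ≤ m0) (hY : Integrable Y μ)
    (hY0 : μ[Y | m] =ᵐ[μ] 0) (a b : ℝ) :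
    μ[fun ω => a + b * Y ω | m] =ᵐ[μ] fun _ => a := by
  have : (fun ω => a + b * Y ω) = (fun _ => a) + b • Y := rfl
  rw [this]
  filter_upwards [condExp_add (integrable_const a) (hY.smul b) m, condExp_smul b Y m, hY0]
    with ω h₁ h₂ h₃
  simp [h₁, h₂, h₃, condExp_const hm]

lemma condExp_exp_mul_le_cosh (hm : m ≤ m0) (hY : AEMeasurable Y μ) (hY1 : ∀ᵐ ω ∂μ, |Y ω| ≤ 1)
    (hY0 : μ[Y | m] =ᵐ[μ] 0) (L : ℝ) :
    μ[fun ω => exp (L * Y ω) | m] ≤ᵐ[μ] fun _ => cosh L := by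
  have hYIcc : ∀ᵐ ω ∂μ, Y ω ∈ Set.Icc (-1) 1 := hY1.mono fun ω => abs_le.1
  have h := condExp_mono (m := m)
    (ProbabilityTheory.integrable_exp_mul_of_mem_Icc (t := L) hY hYIcc)
    ((integrable_const _).add ((Integrable.of_mem_Icc _ _ hY hYIcc).const_mul (sinh L)))
    (hY1.mono fun ω => exp_mul_le_cosh_add_sinh_mul L)
  exact h.trans
    (condExp_const_add_mul_eq_of_condExp_eq_zero hm (.of_mem_Icc _ _ hY hYIcc) hY0 _ _).le

lemma one_le_condExp_exp_mul (hm : m ≤ m0) (hY : AEMeasurable Y μ) (hY1 : ∀ᵐ ω ∂μ, |Y ω| ≤ 1)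
    (hY0 : μ[Y | m] =ᵐ[μ] 0) (L : ℝ) :
    (fun _ => (1 : ℝ)) ≤ᵐ[μ] μ[fun ω => exp (L * Y ω) | m] := by
  have hYIcc : ∀ᵐ ω ∂μ, Y ω ∈ Set.Icc (-1) 1 := hY1.mono fun ω => abs_le.1
  have h := condExp_mono (m := m)
    ((integrable_const 1).add ((Integrable.of_mem_Icc _ _ hY hYIcc).const_mul L))
    (ProbabilityTheory.integrable_exp_mul_of_mem_Icc (t := L) hY hYIcc)
    (ae_of_all _ fun ω => by simpa [add_comm] using add_one_le_exp (L * Y ω))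
  exact (condExp_const_add_mul_eq_of_condExp_eq_zero hm
    (.of_mem_Icc _ _ hY hYIcc) hY0 _ _).symm.le.trans h

end CondExp

section MartingaleDifference

variable {Ω : Type*} {m0 : MeasurableSpace Ω} {μ : Measure Ω} [IsProbabilityMeasure μ]
  {ℱ : Filtration ℕ m0} {X : ℕ → Ω → ℝ}

lemma stronglyMeasurable_sum_range (hX : ∀ k, StronglyMeasurable[ℱ (k + 1)] (X k)) (n : ℕ) :
    StronglyMeasurable[ℱ n] fun ω => ∑ k ∈ range n, X k ω :=
  Finset.stronglyMeasurable_fun_sum _ fun k hk => (hX k).mono (ℱ.mono (mem_range.1 hk))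

lemma integrable_exp_mul_sum_range (hX : ∀ k, StronglyMeasurable[ℱ (k + 1)] (X k))
    (hX1 : ∀ k, ∀ᵐ ω ∂μ, |X k ω| ≤ 1) (L : ℝ) (n : ℕ) :
    Integrable (fun ω => exp (L * ∑ k ∈ range n, X k ω)) μ := by
  refine .of_bound (Real.continuous_exp.comp_stronglyMeasurable
    (((stronglyMeasurable_sum_range hX n).mono (ℱ.le n)).const_mul L)).aestronglyMeasurable
    (exp (|L| * n)) ?_
  filter_upwards [ae_all_iff.2 hX1] with ω hω
  have hsum : |∑ k ∈ range n, X k ω| ≤ n :=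
    (abs_sum_le_sum_abs _ _).trans <| by simpa using sum_le_sum fun k (_ : k ∈ range n) => hω k
  rw [norm_of_nonneg (exp_pos _).le, exp_le_exp]
  calc L * ∑ k ∈ range n, X k ω ≤ |L * ∑ k ∈ range n, X k ω| := le_abs_self _
    _ ≤ |L| * n := by rw [abs_mul]; gcongr

lemma condExp_exp_mul_sum_range_succ (hX : ∀ k, StronglyMeasurable[ℱ (k + 1)] (X k))
    (hX1 : ∀ k, ∀ᵐ ω ∂μ, |X k ω| ≤ 1) (L : ℝ) (n : ℕ) :
    μ[fun ω => exp (L * ∑ k ∈ range (n + 1), X k ω) | ℱ n] =ᵐ[μ]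
      fun ω => exp (L * ∑ k ∈ range n, X k ω) * μ[fun ω => exp (L * X n ω) | ℱ n] ω := by
  have hprod : (fun ω => exp (L * ∑ k ∈ range (n + 1), X k ω)) =
      (fun ω => exp (L * ∑ k ∈ range n, X k ω)) * fun ω => exp (L * X n ω) := by
    ext ω
    simp only [sum_range_succ, mul_add, exp_add, Pi.mul_apply]
  rw [hprod]
  refine condExp_mul_of_stronglyMeasurable_left ?_ ?_ ?_
  · exact Real.continuous_exp.comp_stronglyMeasurable
      ((stronglyMeasurable_sum_range hX n).const_mul L)
  · exact hprod ▸ integrable_exp_mul_sum_range hX hX1 L (n + 1)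
  · exact ProbabilityTheory.integrable_exp_mul_of_mem_Icc
      ((hX n).mono (ℱ.le _)).measurable.aemeasurable ((hX1 n).mono fun ω => abs_le.1)

lemma submartingale_exp_mul_sum_range (hX : ∀ k, StronglyMeasurable[ℱ (k + 1)] (X k))
    (hX1 : ∀ k, ∀ᵐ ω ∂μ, |X k ω| ≤ 1) (hX0 : ∀ k, μ[X k | ℱ k] =ᵐ[μ] 0) (L : ℝ) :
    Submartingale (fun n ω => exp (L * ∑ k ∈ range n, X k ω)) ℱ μ := by
  refine submartingale_nat (fun n => Real.continuous_exp.comp_stronglyMeasurable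
    ((stronglyMeasurable_sum_range hX n).const_mul L)) (integrable_exp_mul_sum_range hX hX1 L)
    fun n => ?_
  filter_upwards [condExp_exp_mul_sum_range_succ hX hX1 L n, one_le_condExp_exp_mul (ℱ.le n)
    ((hX n).mono (ℱ.le _)).measurable.aemeasurable (hX1 n) (hX0 n) L] with ω h₁ h₂
  rw [h₁]
  exact le_mul_of_one_le_right (exp_pos _).le h₂

lemma integral_exp_mul_sum_range_le (hX : ∀ k, StronglyMeasurable[ℱ (k + 1)] (X k))
    (hX1 : ∀ k, ∀ᵐ ω ∂μ, |X k ω| ≤ 1) (hX0 : ∀ k, μ[X k | ℱ k] =ᵐ[μ] 0) (L : ℝ) (n : ℕ) :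
    ∫ ω, exp (L * ∑ k ∈ range n, X k ω) ∂μ ≤ cosh L ^ n := by
  induction n with
  | zero => simp
  | succ n ih =>
    have hle : μ[fun ω => exp (L * ∑ k ∈ range (n + 1), X k ω) | ℱ n] ≤ᵐ[μ]
        fun ω => cosh L * exp (L * ∑ k ∈ range n, X k ω) := by
      filter_upwards [condExp_exp_mul_sum_range_succ hX hX1 L n, condExp_exp_mul_le_cosh (ℱ.le n)
        ((hX n).mono (ℱ.le _)).measurable.aemeasurable (hX1 n) (hX0 n) L] with ω h₁ h₂
      rw [h₁, mul_comm]
      exact mul_le_mul_of_nonneg_right h₂ (exp_pos _).le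
    calc ∫ ω, exp (L * ∑ k ∈ range (n + 1), X k ω) ∂μ
        = ∫ ω, μ[fun ω => exp (L * ∑ k ∈ range (n + 1), X k ω) | ℱ n] ω ∂μ :=
          (integral_condExp (ℱ.le n)).symm
      _ ≤ ∫ ω, cosh L * exp (L * ∑ k ∈ range n, X k ω) ∂μ :=
          integral_mono_ae integrable_condExp
            ((integrable_exp_mul_sum_range hX hX1 L n).const_mul _) hle
      _ ≤ cosh L ^ (n + 1) := by
          rw [integral_const_mul, pow_succ']
          exact mul_le_mul_of_nonneg_left ih (cosh_pos L).le

lemma measure_exists_sum_range_ge_le_exp (hX : ∀ k, StronglyMeasurable[ℱ (k + 1)] (X k))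
    (hX1 : ∀ k, ∀ᵐ ω ∂μ, |X k ω| ≤ 1) (hX0 : ∀ k, μ[X k | ℱ k] =ᵐ[μ] 0) {L : ℝ} (hL : 0 < L)
    (a : ℝ) (n : ℕ) :
    μ {ω | ∃ j ≤ n, a ≤ ∑ k ∈ range j, X k ω} ≤ ENNReal.ofReal (exp (n * L ^ 2 / 2 - L * a)) := by
  set ε : ℝ≥0 := (exp (L * a)).toNNReal
  have hε : (ε : ℝ) = exp (L * a) := coe_toNNReal _ (exp_pos _).le
  -- the event is `{ε ≤ max_{j ≤ n} exp (L * S_j)}`, to which Doob's maximal inequality applies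
  have hset : {ω | ∃ j ≤ n, a ≤ ∑ k ∈ range j, X k ω} = {ω | (ε : ℝ) ≤
      (range (n + 1)).sup' nonempty_range_add_one fun j => exp (L * ∑ k ∈ range j, X k ω)} := by
    ext ω
    simp only [Set.mem_ofPred_eq, le_sup'_iff, mem_range, Nat.lt_succ_iff, hε, exp_le_exp,
      mul_le_mul_iff_right₀ hL]
  have hdoob := maximal_ineq (submartingale_exp_mul_sum_range hX hX1 hX0 L)
    (fun _ _ => (exp_pos _).le) (ε := ε) n
  rw [← hset] at hdoob
  have hint : ∫ ω in {ω | ∃ j ≤ n, a ≤ ∑ k ∈ range j, X k ω},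
      exp (L * ∑ k ∈ range n, X k ω) ∂μ ≤ exp (n * L ^ 2 / 2) :=
    calc _ ≤ ∫ ω, exp (L * ∑ k ∈ range n, X k ω) ∂μ :=
          setIntegral_le_integral (integrable_exp_mul_sum_range hX hX1 L n)
            (ae_of_all _ fun _ => (exp_pos _).le)
      _ ≤ cosh L ^ n := integral_exp_mul_sum_range_le hX hX1 hX0 L n
      _ ≤ exp (L ^ 2 / 2) ^ n := by gcongr; exact cosh_le_exp_half_sq L
      _ = exp (n * L ^ 2 / 2) := by rw [← exp_nat_mul, mul_div_assoc]
  have hε0 : (ε : ℝ≥0∞) ≠ 0 := by simpa [ε] using exp_pos (L * a)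
  rw [exp_sub, ENNReal.ofReal_div_of_pos (exp_pos _)]
  refine (ENNReal.le_div_iff_mul_le (b := ε) (.inl hε0) (.inl ENNReal.coe_ne_top)).2 ?_
  rw [mul_comm]
  exact hdoob.trans (ENNReal.ofReal_le_ofReal hint)

lemma measure_exists_sum_range_ge_le_exp_neg_sq (hX : ∀ k, StronglyMeasurable[ℱ (k + 1)] (X k))
    (hX1 : ∀ k, ∀ᵐ ω ∂μ, |X k ω| ≤ 1) (hX0 : ∀ k, μ[X k | ℱ k] =ᵐ[μ] 0) {N : ℕ} (hN : 0 < N)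
    {t : ℝ} (ht : 0 < t) :
    μ {ω | ∃ j ≤ N, t ≤ ∑ k ∈ range j, X k ω} ≤ ENNReal.ofReal (exp (-t ^ 2 / (2 * N))) := by
  have hN' : (0 : ℝ) < N := Nat.cast_pos.2 hN
  convert measure_exists_sum_range_ge_le_exp hX hX1 hX0 (div_pos ht hN') t N using 3
  field_simp
  ring

lemma measure_exists_sum_range_ge_two_pow_le (hX : ∀ k, StronglyMeasurable[ℱ (k + 1)] (X k))
    (hX1 : ∀ k, ∀ᵐ ω ∂μ, |X k ω| ≤ 1) (hX0 : ∀ k, μ[X k | ℱ k] =ᵐ[μ] 0) (k : ℕ) :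
    μ {ω | ∃ j ≤ 2 ^ k, 2 * √(2 ^ k * log (k + 1)) ≤ ∑ i ∈ range j, X i ω} ≤
      ENNReal.ofReal (1 / (k + 1) ^ 2) := by
  rcases k.eq_zero_or_pos with rfl | hk
  · simpa using prob_le_one
  have hlog : 0 < log (k + 1) := log_pos (by have : (0 : ℝ) < k := Nat.cast_pos.2 hk; linarith)
  refine (measure_exists_sum_range_ge_le_exp_neg_sq hX hX1 hX0 (pow_pos two_pos k)
    (by positivity)).trans_eq ?_
  have hexp : -(2 * √(2 ^ k * log (k + 1))) ^ 2 / (2 * ((2 ^ k : ℕ) : ℝ)) =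
      -log ((k + 1) ^ 2) := by
    rw [mul_pow, sq_sqrt (by positivity), log_pow]
    push_cast
    field_simp
  rw [hexp, exp_neg, exp_log (by positivity), one_div]

lemma ae_eventually_forall_sum_range_lt (hX : ∀ k, StronglyMeasurable[ℱ (k + 1)] (X k))
    (hX1 : ∀ k, ∀ᵐ ω ∂μ, |X k ω| ≤ 1) (hX0 : ∀ k, μ[X k | ℱ k] =ᵐ[μ] 0) :
    ∀ᵐ ω ∂μ, ∀ᶠ k : ℕ in atTop, ∀ j ≤ 2 ^ k, ∑ i ∈ range j, X i ω < 2 * √(2 ^ k * log (k + 1)) := by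
  have hsummable : Summable fun k : ℕ => 1 / ((k : ℝ) + 1) ^ 2 := by
    exact_mod_cast (summable_nat_add_iff 1).2 (Real.summable_one_div_nat_pow.2 one_lt_two)
  have hfinite : ∑' k : ℕ, μ {ω | ∃ j ≤ 2 ^ k, 2 * √(2 ^ k * log (k + 1)) ≤
      ∑ i ∈ range j, X i ω} ≠ ∞ := by
    refine ne_top_of_le_ne_top ?_
      (ENNReal.tsum_le_tsum (measure_exists_sum_range_ge_two_pow_le hX hX1 hX0))
    rw [← ENNReal.ofReal_tsum_of_nonneg (fun _ => by positivity) hsummable]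
    exact ENNReal.ofReal_ne_top
  filter_upwards [ae_eventually_notMem hfinite] with ω hω
  filter_upwards [hω] with k hk j hj
  by_contra! h
  exact hk ⟨j, hj, h⟩

lemma ae_eventually_sum_range_le (hX : ∀ k, StronglyMeasurable[ℱ (k + 1)] (X k))
    (hX1 : ∀ k, ∀ᵐ ω ∂μ, |X k ω| ≤ 1) (hX0 : ∀ k, μ[X k | ℱ k] =ᵐ[μ] 0) :
    ∀ᵐ ω ∂μ, ∀ᶠ n : ℕ in atTop, ∑ k ∈ range n, X k ω ≤ 4 * √(n * log (log n)) := by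
  filter_upwards [ae_eventually_forall_sum_range_lt hX hX1 hX0] with ω hω
  obtain ⟨K, hK⟩ := eventually_atTop.1 hω
  filter_upwards [eventually_ge_atTop (2 ^ max K 7)] with n hn
  set k := Nat.log 2 n + 1
  have hkK : max K 7 ≤ k := (Nat.le_log_of_pow_le one_lt_two hn).trans (Nat.le_succ _)
  have hnk : n < 2 ^ k := Nat.lt_pow_succ_log_self one_lt_two n
  have hkn : 2 ^ k ≤ 2 * n := by
    rw [pow_succ, mul_comm]
    exact Nat.mul_le_mul_left 2 (Nat.pow_log_le_self 2 ((Nat.two_pow_pos _).trans_le hn).ne')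
  exact ((hK k (le_of_max_le_left hkK) n hnk.le).trans_le
    (two_mul_sqrt_two_pow_mul_log_le (le_of_max_le_right hkK) hkn)).le

lemma ae_isBigO_sum_range (hX : ∀ k, StronglyMeasurable[ℱ (k + 1)] (X k))
    (hX1 : ∀ k, ∀ᵐ ω ∂μ, |X k ω| ≤ 1) (hX0 : ∀ k, μ[X k | ℱ k] =ᵐ[μ] 0) :
    ∀ᵐ ω ∂μ, (fun n => ∑ k ∈ range n, X k ω) =O[atTop] fun n => √(n * log (log n)) := by
  have hneg := ae_eventually_sum_range_le (X := fun k ω => -X k ω) (fun k => (hX k).neg)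
    (fun k => by simpa only [abs_neg] using hX1 k) fun k => by
      change μ[-X k | ℱ k] =ᵐ[μ] 0
      filter_upwards [condExp_neg (X k) (ℱ k), hX0 k] with ω h₁ h₂
      simp [h₁, h₂]
  filter_upwards [ae_eventually_sum_range_le hX hX1 hX0, hneg] with ω hpos hneg
  refine .of_bound 4 ?_
  filter_upwards [hpos, hneg] with n hpos hneg
  rw [sum_neg_distrib] at hneg
  rw [norm_eq_abs, norm_of_nonneg (sqrt_nonneg _), abs_le]
  constructor <;> linarith

end MartingaleDifference

theorem stmt_16 {Ω : Type*} {m0 : MeasurableSpace Ω} (μ : Measure Ω)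
    [IsProbabilityMeasure μ] (ℱ : Filtration ℕ m0)
    (ΔM : ℕ → Ω → ℝ)
    (hadapted : ∀ m, StronglyMeasurable[ℱ m] (ΔM m))
    (hbdd : ∀ m, ∀ᵐ ω ∂μ, |ΔM m ω| ≤ 1)
    (hmds : ∀ m, 1 ≤ m → μ[ΔM m | ℱ (m - 1)] =ᵐ[μ] 0) :
    ∀ᵐ ω ∂μ, ∃ C : ℝ, ∀ n : ℕ, 3 ≤ n →
      |∑ m ∈ Finset.Icc 1 n, ΔM m ω|
        ≤ C * Real.sqrt ((n : ℝ) * Real.log (Real.log n)) := by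
  have hmds' (k : ℕ) : μ[ΔM (k + 1) | ℱ k] =ᵐ[μ] 0 := by simpa using hmds (k + 1) k.succ_pos
  filter_upwards [ae_isBigO_sum_range (fun k => hadapted (k + 1)) (fun k => hbdd (k + 1)) hmds']
    with ω hω
  obtain ⟨C, -, hC⟩ := bound_of_isBigO_nat_atTop hω
  refine ⟨C, fun n hn => ?_⟩
  have hpos : 0 < √(n * log (log n)) :=
    sqrt_pos.2 (mul_pos (by positivity) (log_log_pos (by exact_mod_cast hn)))
  have hbound := hC hpos.ne'
  rw [norm_of_nonneg hpos.le, norm_eq_abs] at hbound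
  rw [sum_Icc_one_eq_sum_range (fun m => ΔM m ω)]
  exact hbound
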